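/- Assume: (i) the SBP property Q + Qᵀ = V_fᵀ B V_f, (ii) Q 1 = 0 and t_Lᵀ1 = t_Rᵀ1 = 1, and (iii) the entropy setup with f_S symmetric and entropy conservative, and v a bijection with inverse u(·). Let S_h, B_h, Q_h = S_h + (1/2)B_h, I_h, W_h, ṽ, ũ, and F_S be as in the two-element decoupled formulation, and let f*_L, f*_R ∈ ℝ^m be boundary numerical fluxes. Suppose u_h(t) = (u¹(t), u²(t)) is differentiable in t and satisfies, componentwise, W_h (d u_h/dt) + 2 I_hᵀ (S_h ∘ F_S) 1 + I_hᵀ B_h g = 0, where g ∈ (ℝ^m)^{2(N+3)} is zero at all volume-node slots, equals f*_L at the element-1 left-face slot, f*_R at the element-2 right-face slot, and is zero at the remaining face slots. If the boundary fluxes are entropy stable with respect to the outward normals n_L = -1 and n_R = +1, i.e., v_L·f*_L - ψ(ũ_L) ≤ 0 and v_R·f*_R - ψ(ũ_R) ≥ 0, where v_L = Σ_j (t_L)_j v(u¹_j), v_R = Σ_j (t_R)_j v(u²_j), ũ_L = u(v_L), ũ_R = u(v_R), then the total entropy is nonincreasing: d/dt [ Σ_{k=1,2} Σ_{i=1}^{N+1}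 w_i S(u^k_i(t)) ] ≤ 0 for all t. -/

import Mathlib

/-!
Testing the scheme with the nodal entropy variables gives the entropy rate, and moving `I_h` to
the other side turns it into a test with the interpolated variables `ṽ = v(ũ)`. Since `S_h` is
skew-symmetric (by the SBP property) and `f_S` is symmetric and entropy conservative, the volume
term telescopes to `∑ₐ (S_h 1)ₐ ψ(ũₐ)`. The row sums of `S_h` vanish except at the two boundary
faces, where they are `±1/2` (this uses `Q 1 = 0` and `t_Lᵀ 1 = t_Rᵀ 1 = 1`), so the entropy
rate is `(v_L·f*_L - ψ(ũ_L)) - (v_R·f*_R - ψ(ũ_R)) ≤ 0`.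
-/

open Matrix BigOperators

section EntropyRate

variable {κ : Type*} [Fintype κ]

theorem hasDerivAt_comp_of_hasFDerivAt_sum_proj {Sfun : (κ → ℝ) → ℝ} {u : ℝ → κ → ℝ} {t : ℝ}
    {p : κ → ℝ}
    (hgrad : HasFDerivAt Sfun (∑ c, p c • (ContinuousLinearMap.proj c : (κ → ℝ) →L[ℝ] ℝ)) (u t))
    (hu : ∀ c, DifferentiableAt ℝ (fun s => u s c) t) :
    HasDerivAt (fun s => Sfun (u s)) (p ⬝ᵥ fun c => deriv (fun s => u s c) t) t := by
  have hU : HasDerivAt u (fun c => deriv (fun s => u s c) t) t :=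
    hasDerivAt_pi.2 fun c => (hu c).hasDerivAt
  simpa [Function.comp_def, _root_.sum_apply, dotProduct] using hgrad.comp_hasDerivAt t hU

theorem hasDerivAt_sum_mul_comp_of_hasFDerivAt_sum_proj {K : Type*} [Fintype K]
    {Sfun : (κ → ℝ) → ℝ} {v : (κ → ℝ) → κ → ℝ} (w : K → ℝ) {u : ℝ → K → κ → ℝ} {t : ℝ}
    (hgrad : ∀ k, HasFDerivAt Sfun
      (∑ c, v (u t k) c • (ContinuousLinearMap.proj c : (κ → ℝ) →L[ℝ] ℝ)) (u t k))
    (hu : ∀ k c, DifferentiableAt ℝ (fun s => u s k c) t) :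
    HasDerivAt (fun s => ∑ k, w k * Sfun (u s k))
      (∑ k, w k * (v (u t k) ⬝ᵥ fun c => deriv (fun s => u s k c) t)) t :=
  HasDerivAt.fun_sum fun k _ =>
    (hasDerivAt_comp_of_hasFDerivAt_sum_proj (u := fun s => u s k) (hgrad k) (hu k)).const_mul (w k)

theorem hasDerivAt_add_sum_mul_comp_of_hasFDerivAt_sum_proj {n : Type*} [Fintype n]
    {Sfun : (κ → ℝ) → ℝ} {v : (κ → ℝ) → κ → ℝ}
    (hgrad : ∀ y, HasFDerivAt Sfun
      (∑ c, v y c • (ContinuousLinearMap.proj c : (κ → ℝ) →L[ℝ] ℝ)) y)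
    (w : n → ℝ) {u1 u2 : ℝ → n → κ → ℝ} {t : ℝ}
    (hd1 : ∀ i c, DifferentiableAt ℝ (fun s => u1 s i c) t)
    (hd2 : ∀ i c, DifferentiableAt ℝ (fun s => u2 s i c) t) :
    HasDerivAt (fun s => (∑ i, w i * Sfun (u1 s i)) + ∑ i, w i * Sfun (u2 s i))
      (∑ k, Sum.elim w w k * (Sum.elim (fun i => v (u1 t i)) (fun i => v (u2 t i)) k ⬝ᵥ
        fun c => deriv (fun s => Sum.elim (fun i => u1 s i c) (fun i => u2 s i c) k) t)) t := by
  have h := hasDerivAt_sum_mul_comp_of_hasFDerivAt_sum_proj (Sum.elim w w)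
    (u := fun s k c => Sum.elim (fun i => u1 s i c) (fun i => u2 s i c) k) (t := t)
    (fun _ => hgrad _) (by rintro (i | i) c; exacts [hd1 i c, hd2 i c])
  convert h using 1
  · exact funext fun s => by rw [Fintype.sum_sum_type]; rfl
  · exact Fintype.sum_congr _ _ fun k => by rcases k with i | i <;> rfl

end EntropyRate

section FluxDifferencing

variable {ι K κ α : Type*} [Fintype ι] [Fintype K] [Fintype κ]

theorem sum_sum_mul_swap_of_transpose_eq_neg {A : Matrix ι ι ℝ} (hA : Aᵀ = -A)
    (F : ι → ι → ℝ) : ∑ a, ∑ b, A a b * F a b = -∑ a, ∑ b, A a b * F b a := by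
  rw [Finset.sum_comm, ← Finset.sum_neg_distrib]
  refine Fintype.sum_congr _ _ fun a => ?_
  rw [← Finset.sum_neg_distrib]
  refine Fintype.sum_congr _ _ fun b => ?_
  have h : A b a = -A a b := by simpa using congrFun (congrFun hA a) b
  rw [h, neg_mul]

theorem sum_sum_mul_dotProduct_flux_of_transpose_eq_neg
    {v : α → κ → ℝ} {ψ : α → ℝ} {fS : α → α → κ → ℝ}
    (hsym : ∀ a b, fS a b = fS b a) (hec : ∀ a b, (v a - v b) ⬝ᵥ fS a b = ψ a - ψ b)
    {A : Matrix ι ι ℝ} (hA : Aᵀ = -A) (x : ι → α) :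
    ∑ a, ∑ b, A a b * (v (x a) ⬝ᵥ fS (x a) (x b)) = ∑ a, (A *ᵥ 1) a * ψ (x a) := by
  have hflux := sum_sum_mul_swap_of_transpose_eq_neg hA fun a b => v (x a) ⬝ᵥ fS (x a) (x b)
  have hpot := sum_sum_mul_swap_of_transpose_eq_neg hA fun a _ => ψ (x a)
  have hdiff : ∑ a, ∑ b, A a b * (ψ (x a) - ψ (x b))
      = ∑ a, ∑ b, A a b * (v (x a) ⬝ᵥ fS (x a) (x b))
        - ∑ a, ∑ b, A a b * (v (x b) ⬝ᵥ fS (x b) (x a)) := by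
    simp only [← Finset.sum_sub_distrib]
    refine Fintype.sum_congr _ _ fun a => Fintype.sum_congr _ _ fun b => ?_
    rw [← hec, hsym (x b), sub_dotProduct, mul_sub]
  simp only [mul_sub, Finset.sum_sub_distrib] at hdiff
  have hrow : ∑ a, (A *ᵥ 1) a * ψ (x a) = ∑ a, ∑ b, A a b * ψ (x a) := by
    simp [mulVec, dotProduct, Finset.sum_mul]
  linarith

theorem sum_mul_dotProduct_eq_neg_of_mul_add_transpose_eq_zero (I : Matrix ι K ℝ) (W : K → ℝ)
    (V du : K → κ → ℝ) (R : ι → κ → ℝ) (h : ∀ k c, W k * du k c + ∑ a, I a k * R a c = 0) :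
    ∑ k, W k * (V k ⬝ᵥ du k) = -∑ a, (fun c => ∑ k, I a k * V k c) ⬝ᵥ R a := by
  have hdu : ∀ k c, W k * du k c = -∑ a, I a k * R a c :=
    fun k c => eq_neg_of_add_eq_zero_left (h k c)
  calc ∑ k, W k * (V k ⬝ᵥ du k) = ∑ k, ∑ c, V k c * (W k * du k c) := by
        simp only [dotProduct, Finset.mul_sum, mul_left_comm]
    _ = -∑ a, ∑ k, ∑ c, I a k * V k c * R a c := by
        simp only [hdu, Finset.mul_sum, ← Finset.sum_neg_distrib]
        rw [Finset.sum_comm_cycle]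
        exact Fintype.sum_congr _ _ fun a => Fintype.sum_congr _ _ fun k =>
          Fintype.sum_congr _ _ fun c => by ring
    _ = -∑ a, (fun c => ∑ k, I a k * V k c) ⬝ᵥ R a := by
        simp only [dotProduct, Finset.sum_mul]
        rw [Finset.sum_congr rfl fun a _ => Finset.sum_comm]

theorem sum_mul_dotProduct_eq_of_fluxDifferencing
    {v : α → κ → ℝ} {ψ : α → ℝ} {fS : α → α → κ → ℝ}
    (hsym : ∀ a b, fS a b = fS b a) (hec : ∀ a b, (v a - v b) ⬝ᵥ fS a b = ψ a - ψ b)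
    (I : Matrix ι K ℝ) (W : K → ℝ) (V du : K → κ → ℝ) {Sh : Matrix ι ι ℝ} (hSh : Shᵀ = -Sh)
    (Bh : Matrix ι ι ℝ) (g : ι → κ → ℝ) (x : ι → α)
    (hx : ∀ a, v (x a) = fun c => ∑ k, I a k * V k c)
    (h : ∀ k c, W k * du k c + 2 * (∑ a, I a k * ∑ b, Sh a b * fS (x a) (x b) c)
      + (∑ a, I a k * ∑ b, Bh a b * g b c) = 0) :
    ∑ k, W k * (V k ⬝ᵥ du k)
      = -(2 * ∑ a, (Sh *ᵥ 1) a * ψ (x a) + ∑ a, v (x a) ⬝ᵥ ∑ b, Bh a b • g b) := by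
  rw [sum_mul_dotProduct_eq_neg_of_mul_add_transpose_eq_zero I W V du
    (fun a => (2 : ℝ) • ∑ b, Sh a b • fS (x a) (x b) + ∑ b, Bh a b • g b)]
  · simp only [← hx, dotProduct_add, dotProduct_smul, dotProduct_sum, smul_eq_mul,
      Finset.sum_add_distrib, ← Finset.mul_sum]
    rw [sum_sum_mul_dotProduct_flux_of_transpose_eq_neg hsym hec hSh]
  · intro k c
    rw [← h k c]
    simp only [Pi.add_apply, Pi.smul_apply, Finset.sum_apply, smul_eq_mul, mul_add,
      Finset.sum_add_distrib, Finset.mul_sum]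
    simp only [add_assoc, mul_left_comm (I _ k)]

end FluxDifferencing

theorem fromBlocks_transpose_eq_neg {l m : Type*} {A : Matrix l l ℝ} {B : Matrix l m ℝ}
    {C : Matrix m l ℝ} {D : Matrix m m ℝ} (hA : Aᵀ = -A) (hD : Dᵀ = -D) (hC : Cᵀ = -B) :
    (fromBlocks A B C D)ᵀ = -fromBlocks A B C D := by
  have hB : Bᵀ = -C := by
    rw [← transpose_transpose C, hC, transpose_neg, neg_neg]
  rw [fromBlocks_transpose, fromBlocks_neg, hA, hB, hC, hD]

section ElementOperators

variable {n f : Type*} [Fintype f]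

noncomputable def elementSkew (S : Matrix n n ℝ) (Vf : Matrix f n ℝ) (B : Matrix f f ℝ) :
    Matrix (n ⊕ f) (n ⊕ f) ℝ :=
  fromBlocks S ((1 / 2 : ℝ) • (Vfᵀ * B)) (-((1 / 2 : ℝ) • (B * Vf))) 0

variable {Q S : Matrix n n ℝ} {Vf : Matrix f n ℝ} {B : Matrix f f ℝ}

theorem transpose_eq_neg_of_add_transpose_eq (hB : Bᵀ = B) (hSBP : Q + Qᵀ = Vfᵀ * B * Vf)
    (hS : S = Q - (1 / 2 : ℝ) • (Vfᵀ * B * Vf)) : Sᵀ = -S := by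
  have hM : (Vfᵀ * B * Vf)ᵀ = Vfᵀ * B * Vf := by
    rw [transpose_mul, transpose_mul, transpose_transpose, hB, Matrix.mul_assoc]
  rw [hS, transpose_sub, transpose_smul, hM, ← hSBP]
  module

theorem elementSkew_transpose (hS : Sᵀ = -S) (hB : Bᵀ = B) :
    (elementSkew S Vf B)ᵀ = -elementSkew S Vf B :=
  fromBlocks_transpose_eq_neg hS (by simp) (by simp [transpose_mul, hB])

theorem elementSkew_mulVec_one [Fintype n] (hS : S = Q - (1 / 2 : ℝ) • (Vfᵀ * B * Vf))
    (hQ1 : Q *ᵥ 1 = 0) (hV1 : Vf *ᵥ 1 = 1) :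
    elementSkew S Vf B *ᵥ 1 = Sum.elim (0 : n → ℝ) (-((1 / 2 : ℝ) • (B *ᵥ 1))) := by
  simp only [elementSkew, fromBlocks_mulVec, Pi.one_comp, hS, sub_mulVec, smul_mulVec,
    neg_mulVec, zero_mulVec, ← mulVec_mulVec, hQ1, hV1, zero_sub, neg_add_cancel, add_zero]

end ElementOperators

section TwoElements

variable {n : Type*}

/-- Face `1` (right) of the first element is coupled to face `0` (left) of the second. -/
noncomputable def twoElementSkew (S : Matrix n n ℝ) (Vf : Matrix (Fin 2) n ℝ)
    (B : Matrix (Fin 2) (Fin 2) ℝ) (eL eR : Fin 2 → ℝ) :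
    Matrix ((n ⊕ Fin 2) ⊕ (n ⊕ Fin 2)) ((n ⊕ Fin 2) ⊕ (n ⊕ Fin 2)) ℝ :=
  fromBlocks (elementSkew S Vf B) (fromBlocks 0 0 0 ((1 / 2 : ℝ) • vecMulVec eR eL))
    (fromBlocks 0 0 0 (-((1 / 2 : ℝ) • vecMulVec eL eR))) (elementSkew S Vf B)

variable {Q S : Matrix n n ℝ} {Vf : Matrix (Fin 2) n ℝ}

theorem twoElementSkew_transpose {B : Matrix (Fin 2) (Fin 2) ℝ} (hS : Sᵀ = -S) (hB : Bᵀ = B)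
    (eL eR : Fin 2 → ℝ) : (twoElementSkew S Vf B eL eR)ᵀ = -twoElementSkew S Vf B eL eR :=
  fromBlocks_transpose_eq_neg (elementSkew_transpose hS hB) (elementSkew_transpose hS hB)
    (by simp [fromBlocks_transpose, fromBlocks_neg])

variable [Fintype n]

theorem twoElementSkew_mulVec_one
    (hS : S = Q - (1 / 2 : ℝ) • (Vfᵀ * diagonal ![(-1 : ℝ), 1] * Vf))
    (hQ1 : Q *ᵥ 1 = 0) (hV1 : Vf *ᵥ 1 = 1) :
    twoElementSkew S Vf (diagonal ![(-1 : ℝ), 1]) ![1, 0] ![0, 1] *ᵥ 1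
      = Sum.elim (Sum.elim (0 : n → ℝ) ![1 / 2, 0]) (Sum.elim (0 : n → ℝ) ![0, -(1 / 2)]) := by
  simp only [twoElementSkew, fromBlocks_mulVec, Pi.one_comp, elementSkew_mulVec_one hS hQ1 hV1]
  ext ((i | f) | (i | f)) <;> simp <;> fin_cases f <;> simp

theorem sum_twoElementSkew_mulVec_one_mul
    (hS : S = Q - (1 / 2 : ℝ) • (Vfᵀ * diagonal ![(-1 : ℝ), 1] * Vf))
    (hQ1 : Q *ᵥ 1 = 0) (hV1 : Vf *ᵥ 1 = 1) (p : (n ⊕ Fin 2) ⊕ (n ⊕ Fin 2) → ℝ) :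
    ∑ a, (twoElementSkew S Vf (diagonal ![(-1 : ℝ), 1]) ![1, 0] ![0, 1] *ᵥ 1) a * p a
      = (p (Sum.inl (Sum.inr 0)) - p (Sum.inr (Sum.inr 1))) / 2 := by
  rw [twoElementSkew_mulVec_one hS hQ1 hV1]
  simp only [Fintype.sum_sum_type, Sum.elim_inl, Sum.elim_inr, Pi.zero_apply, zero_mul,
    Finset.sum_const_zero, Fin.sum_univ_two, cons_val_zero, cons_val_one, zero_add]
  ring

theorem sum_dotProduct_boundary {κ : Type*} [Fintype κ]
    {Bh : Matrix ((n ⊕ Fin 2) ⊕ (n ⊕ Fin 2)) ((n ⊕ Fin 2) ⊕ (n ⊕ Fin 2)) ℝ}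
    (hBh : Bh = fromBlocks (fromBlocks 0 0 0 (-vecMulVec ![1, 0] ![1, 0])) 0 0
        (fromBlocks 0 0 0 (vecMulVec ![0, 1] ![0, 1])))
    {fL fR : κ → ℝ} {g : (n ⊕ Fin 2) ⊕ (n ⊕ Fin 2) → κ → ℝ}
    (hg : g = Sum.elim (Sum.elim (fun _ => 0) (fun f => if f = 0 then fL else 0))
            (Sum.elim (fun _ => 0) (fun f => if f = 1 then fR else 0)))
    (y : (n ⊕ Fin 2) ⊕ (n ⊕ Fin 2) → κ → ℝ) :
    ∑ a, y a ⬝ᵥ ∑ b, Bh a b • g b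
      = -(y (Sum.inl (Sum.inr 0)) ⬝ᵥ fL) + y (Sum.inr (Sum.inr 1)) ⬝ᵥ fR := by
  subst hBh hg
  simp [Fintype.sum_sum_type, Fin.sum_univ_two]

variable [DecidableEq n] {Ih : Matrix ((n ⊕ Fin 2) ⊕ (n ⊕ Fin 2)) (n ⊕ n) ℝ}

theorem sum_fromBlocks_fromRows_mul_inl
    (hIh : Ih = fromBlocks (fromRows 1 Vf) 0 0 (fromRows 1 Vf)) (x : n ⊕ n → ℝ) (f : Fin 2) :
    ∑ k, Ih (Sum.inl (Sum.inr f)) k * x k = ∑ j, Vf f j * x (Sum.inl j) := by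
  simp [hIh, Fintype.sum_sum_type]

theorem sum_fromBlocks_fromRows_mul_inr
    (hIh : Ih = fromBlocks (fromRows 1 Vf) 0 0 (fromRows 1 Vf)) (x : n ⊕ n → ℝ) (f : Fin 2) :
    ∑ k, Ih (Sum.inr (Sum.inr f)) k * x k = ∑ j, Vf f j * x (Sum.inr j) := by
  simp [hIh, Fintype.sum_sum_type]

end TwoElements

theorem two_element_decoupled_entropy_inequality_bc_general
    (N m : ℕ)
    (w : Fin (N + 1) → ℝ)
    (Q : Matrix (Fin (N + 1)) (Fin (N + 1)) ℝ)
    (Vf : Matrix (Fin 2) (Fin (N + 1)) ℝ)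
    (B : Matrix (Fin 2) (Fin 2) ℝ)
    (hB : B = Matrix.diagonal ![(-1 : ℝ), 1])
    -- (i) the SBP property
    (hSBP : Q + Qᵀ = Vfᵀ * B * Vf)
    -- (ii) row sums
    (hQ1 : Q *ᵥ (fun _ => (1 : ℝ)) = 0)
    (htL1 : ∑ j, Vf 0 j = 1) (htR1 : ∑ j, Vf 1 j = 1)
    (eL eR : Fin 2 → ℝ) (heL : eL = ![1, 0]) (heR : eR = ![0, 1])
    (S : Matrix (Fin (N + 1)) (Fin (N + 1)) ℝ)
    (hS : S = Q - (1 / 2 : ℝ) • (Vfᵀ * B * Vf))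
    -- two-element decoupled matrices
    (Sh Bh : Matrix ((Fin (N + 1) ⊕ Fin 2) ⊕ (Fin (N + 1) ⊕ Fin 2))
                       ((Fin (N + 1) ⊕ Fin 2) ⊕ (Fin (N + 1) ⊕ Fin 2)) ℝ)
    (hSh : Sh = Matrix.fromBlocks
      (Matrix.fromBlocks S ((1 / 2 : ℝ) • (Vfᵀ * B)) (-((1 / 2 : ℝ) • (B * Vf))) 0)
      (Matrix.fromBlocks 0 0 0 ((1 / 2 : ℝ) • Matrix.vecMulVec eR eL))
      (Matrix.fromBlocks 0 0 0 (-((1 / 2 : ℝ) • Matrix.vecMulVec eL eR)))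
      (Matrix.fromBlocks S ((1 / 2 : ℝ) • (Vfᵀ * B)) (-((1 / 2 : ℝ) • (B * Vf))) 0))
    (hBh : Bh = Matrix.fromBlocks
      (Matrix.fromBlocks 0 0 0 (-(Matrix.vecMulVec eL eL))) 0
      0 (Matrix.fromBlocks 0 0 0 (Matrix.vecMulVec eR eR)))
    (Ih : Matrix ((Fin (N + 1) ⊕ Fin 2) ⊕ (Fin (N + 1) ⊕ Fin 2))
                 (Fin (N + 1) ⊕ Fin (N + 1)) ℝ)
    (hIh : Ih = Matrix.fromBlocks
      (Matrix.fromRows (1 : Matrix (Fin (N + 1)) (Fin (N + 1)) ℝ) Vf) 0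
      0 (Matrix.fromRows (1 : Matrix (Fin (N + 1)) (Fin (N + 1)) ℝ) Vf))
    -- (iii) the entropy setup
    (Sfun : (Fin m → ℝ) → ℝ) (v uu : (Fin m → ℝ) → Fin m → ℝ)
    (ψ : (Fin m → ℝ) → ℝ) (fS : (Fin m → ℝ) → (Fin m → ℝ) → Fin m → ℝ)
    (hgrad : ∀ y : Fin m → ℝ,
      HasFDerivAt Sfun (∑ c, v y c • (ContinuousLinearMap.proj c : (Fin m → ℝ) →L[ℝ] ℝ)) y)
    (hvu : Function.RightInverse uu v)
    (hsym : ∀ a b, fS a b = fS b a)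
    (hec : ∀ a b, (v a - v b) ⬝ᵥ fS a b = ψ a - ψ b)
    -- boundary numerical fluxes and boundary data vector
    (fstarL fstarR : Fin m → ℝ)
    (g : ((Fin (N + 1) ⊕ Fin 2) ⊕ (Fin (N + 1) ⊕ Fin 2)) → Fin m → ℝ)
    (hg : g = Sum.elim
      (Sum.elim (fun _ => 0) (fun a => if a = 0 then fstarL else 0))
      (Sum.elim (fun _ => 0) (fun a => if a = 1 then fstarR else 0)))
    -- the semi-discrete solution and formulation
    (u1 u2 : ℝ → Fin (N + 1) → Fin m → ℝ)
    (hd1 : ∀ i c, Differentiable ℝ (fun t => u1 t i c))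
    (hd2 : ∀ i c, Differentiable ℝ (fun t => u2 t i c))
    (vtil util : ℝ → ((Fin (N + 1) ⊕ Fin 2) ⊕ (Fin (N + 1) ⊕ Fin 2)) → Fin m → ℝ)
    (hvtil : ∀ t k c, vtil t k c
      = ∑ j, Ih k j * Sum.elim (fun i => v (u1 t i)) (fun i => v (u2 t i)) j c)
    (hutil : ∀ t k, util t k = uu (vtil t k))
    (hform : ∀ (t : ℝ) (k : Fin (N + 1) ⊕ Fin (N + 1)) (c : Fin m),
      Sum.elim w w k
          * deriv (fun s => Sum.elim (fun i => u1 s i c) (fun i => u2 s i c) k) t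
        + 2 * (∑ a, Ih a k * ∑ b, Sh a b * fS (util t a) (util t b) c)
        + (∑ a, Ih a k * ∑ b, Bh a b * g b c) = 0)
    -- entropy stable boundary fluxes (outward normals n_L = -1, n_R = +1)
    (hbcL : ∀ t : ℝ,
      ((fun c => ∑ j, Vf 0 j * v (u1 t j) c) ⬝ᵥ fstarL)
        - ψ (uu fun c => ∑ j, Vf 0 j * v (u1 t j) c) ≤ 0)
    (hbcR : ∀ t : ℝ,
      0 ≤ ((fun c => ∑ j, Vf 1 j * v (u2 t j) c) ⬝ᵥ fstarR)
        - ψ (uu fun c => ∑ j, Vf 1 j * v (u2 t j) c)) :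
    ∀ t : ℝ,
      deriv (fun s => (∑ i, w i * Sfun (u1 s i)) + ∑ i, w i * Sfun (u2 s i)) t ≤ 0 := by
  subst hB heL heR
  intro t
  have hV1 : Vf *ᵥ 1 = 1 := by
    ext f
    fin_cases f <;> simpa [mulVec, dotProduct]
  have hSh_skew : Shᵀ = -Sh := hSh ▸ twoElementSkew_transpose
    (transpose_eq_neg_of_add_transpose_eq (diagonal_transpose _) hSBP hS) (diagonal_transpose _) _ _
  have hv_util : ∀ a, v (util t a) = vtil t a := fun a => by rw [hutil, hvu]
  rw [(hasDerivAt_add_sum_mul_comp_of_hasFDerivAt_sum_proj hgrad w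
      (fun i c => (hd1 i c).differentiableAt) (fun i c => (hd2 i c).differentiableAt)).deriv,
    sum_mul_dotProduct_eq_of_fluxDifferencing hsym hec Ih _ _ _ hSh_skew Bh g (util t)
      (fun a => (hv_util a).trans (funext (hvtil t a))) (hform t)]
  have hrow : ∑ a, (Sh *ᵥ 1) a * ψ (util t a)
      = (ψ (util t (Sum.inl (Sum.inr 0))) - ψ (util t (Sum.inr (Sum.inr 1)))) / 2 := by
    rw [hSh]
    exact sum_twoElementSkew_mulVec_one_mul hS hQ1 hV1 _
  have hfaceL : vtil t (Sum.inl (Sum.inr 0)) = fun c => ∑ j, Vf 0 j * v (u1 t j) c :=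
    funext fun c => (hvtil t _ c).trans (sum_fromBlocks_fromRows_mul_inl hIh _ 0)
  have hfaceR : vtil t (Sum.inr (Sum.inr 1)) = fun c => ∑ j, Vf 1 j * v (u2 t j) c :=
    funext fun c => (hvtil t _ c).trans (sum_fromBlocks_fromRows_mul_inr hIh _ 1)
  rw [hrow, sum_dotProduct_boundary hBh hg, hv_util, hv_util, hutil, hutil, hfaceL, hfaceR]
  linarith [hbcL t, hbcR t]

/-- **Semi-discrete entropy inequality with weakly imposed boundary conditions.** If the
two-element decoupled scheme is augmented with boundary numerical fluxes `f*_L, f*_R`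
satisfying the entropy stability conditions `v_L·f*_L - ψ(ũ_L) ≤ 0` and
`v_R·f*_R - ψ(ũ_R) ≥ 0`, then the total entropy is nonincreasing. -/
theorem two_element_decoupled_entropy_inequality_bc
    (N m : ℕ) (hm : 1 ≤ m)
    (w : Fin (N + 1) → ℝ)
    (Q : Matrix (Fin (N + 1)) (Fin (N + 1)) ℝ)
    (Vf : Matrix (Fin 2) (Fin (N + 1)) ℝ)
    (B : Matrix (Fin 2) (Fin 2) ℝ)
    (hB : B = Matrix.diagonal ![(-1 : ℝ), 1])
    -- (i) the SBP property
    (hSBP : Q + Qᵀ = Vfᵀ * B * Vf)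
    -- (ii) row sums
    (hQ1 : Q *ᵥ (fun _ => (1 : ℝ)) = 0)
    (htL1 : ∑ j, Vf 0 j = 1) (htR1 : ∑ j, Vf 1 j = 1)
    (eL eR : Fin 2 → ℝ) (heL : eL = ![1, 0]) (heR : eR = ![0, 1])
    (S : Matrix (Fin (N + 1)) (Fin (N + 1)) ℝ)
    (hS : S = Q - (1 / 2 : ℝ) • (Vfᵀ * B * Vf))
    -- two-element decoupled matrices
    (Sh Bh Qh : Matrix ((Fin (N + 1) ⊕ Fin 2) ⊕ (Fin (N + 1) ⊕ Fin 2))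
                       ((Fin (N + 1) ⊕ Fin 2) ⊕ (Fin (N + 1) ⊕ Fin 2)) ℝ)
    (hSh : Sh = Matrix.fromBlocks
      (Matrix.fromBlocks S ((1 / 2 : ℝ) • (Vfᵀ * B)) (-((1 / 2 : ℝ) • (B * Vf))) 0)
      (Matrix.fromBlocks 0 0 0 ((1 / 2 : ℝ) • Matrix.vecMulVec eR eL))
      (Matrix.fromBlocks 0 0 0 (-((1 / 2 : ℝ) • Matrix.vecMulVec eL eR)))
      (Matrix.fromBlocks S ((1 / 2 : ℝ) • (Vfᵀ * B)) (-((1 / 2 : ℝ) • (B * Vf))) 0))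
    (hBh : Bh = Matrix.fromBlocks
      (Matrix.fromBlocks 0 0 0 (-(Matrix.vecMulVec eL eL))) 0
      0 (Matrix.fromBlocks 0 0 0 (Matrix.vecMulVec eR eR)))
    (hQh : Qh = Sh + (1 / 2 : ℝ) • Bh)
    (Ih : Matrix ((Fin (N + 1) ⊕ Fin 2) ⊕ (Fin (N + 1) ⊕ Fin 2))
                 (Fin (N + 1) ⊕ Fin (N + 1)) ℝ)
    (hIh : Ih = Matrix.fromBlocks
      (Matrix.fromRows (1 : Matrix (Fin (N + 1)) (Fin (N + 1)) ℝ) Vf) 0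
      0 (Matrix.fromRows (1 : Matrix (Fin (N + 1)) (Fin (N + 1)) ℝ) Vf))
    -- (iii) the entropy setup
    (Sfun : (Fin m → ℝ) → ℝ) (v uu : (Fin m → ℝ) → Fin m → ℝ)
    (ψ : (Fin m → ℝ) → ℝ) (fS : (Fin m → ℝ) → (Fin m → ℝ) → Fin m → ℝ)
    (hgrad : ∀ y : Fin m → ℝ,
      HasFDerivAt Sfun (∑ c, v y c • (ContinuousLinearMap.proj c : (Fin m → ℝ) →L[ℝ] ℝ)) y)
    (huv : Function.LeftInverse uu v) (hvu : Function.RightInverse uu v)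
    (hsym : ∀ a b, fS a b = fS b a)
    (hec : ∀ a b, (v a - v b) ⬝ᵥ fS a b = ψ a - ψ b)
    -- boundary numerical fluxes and boundary data vector
    (fstarL fstarR : Fin m → ℝ)
    (g : ((Fin (N + 1) ⊕ Fin 2) ⊕ (Fin (N + 1) ⊕ Fin 2)) → Fin m → ℝ)
    (hg : g = Sum.elim
      (Sum.elim (fun _ => 0) (fun a => if a = 0 then fstarL else 0))
      (Sum.elim (fun _ => 0) (fun a => if a = 1 then fstarR else 0)))
    -- the semi-discrete solution and formulation
    (u1 u2 : ℝ → Fin (N + 1) → Fin m → ℝ)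
    (hd1 : ∀ i c, Differentiable ℝ (fun t => u1 t i c))
    (hd2 : ∀ i c, Differentiable ℝ (fun t => u2 t i c))
    (vtil util : ℝ → ((Fin (N + 1) ⊕ Fin 2) ⊕ (Fin (N + 1) ⊕ Fin 2)) → Fin m → ℝ)
    (hvtil : ∀ t k c, vtil t k c
      = ∑ j, Ih k j * Sum.elim (fun i => v (u1 t i)) (fun i => v (u2 t i)) j c)
    (hutil : ∀ t k, util t k = uu (vtil t k))
    (hform : ∀ (t : ℝ) (k : Fin (N + 1) ⊕ Fin (N + 1)) (c : Fin m),
      Sum.elim w w k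
          * deriv (fun s => Sum.elim (fun i => u1 s i c) (fun i => u2 s i c) k) t
        + 2 * (∑ a, Ih a k * ∑ b, Sh a b * fS (util t a) (util t b) c)
        + (∑ a, Ih a k * ∑ b, Bh a b * g b c) = 0)
    -- entropy stable boundary fluxes (outward normals n_L = -1, n_R = +1)
    (hbcL : ∀ t : ℝ,
      ((fun c => ∑ j, Vf 0 j * v (u1 t j) c) ⬝ᵥ fstarL)
        - ψ (uu fun c => ∑ j, Vf 0 j * v (u1 t j) c) ≤ 0)
    (hbcR : ∀ t : ℝ,
      0 ≤ ((fun c => ∑ j, Vf 1 j * v (u2 t j) c) ⬝ᵥ fstarR)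
        - ψ (uu fun c => ∑ j, Vf 1 j * v (u2 t j) c)) :
    ∀ t : ℝ,
      deriv (fun s => (∑ i, w i * Sfun (u1 s i)) + ∑ i, w i * Sfun (u2 s i)) t ≤ 0 :=
  two_element_decoupled_entropy_inequality_bc_general N m w Q Vf B hB hSBP hQ1 htL1 htR1 eL eR heL
    heR S hS Sh Bh hSh hBh Ih hIh Sfun v uu ψ fS hgrad hvu hsym hec fstarL fstarR g hg u1 u2 hd1 hd2
    vtil util hvtil hutil hform hbcL hbcR
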